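/- Let r ≥ 1, γ > 0, let g : [t₀, ∞) → ℝ^r be continuous, and let Θ : [t₀, ∞) → ℝ^{nr} be differentiable and satisfy Θ̇(t) = −γ (L ⊗ I_r) Θ(t) + 1ₙ ⊗ g(t) (i.e., all agents receive the identical input g). Let M = Iₙ − (1/n) 1ₙ 1ₙᵀ. Then the disagreement δ(t) = (M ⊗ I_r) Θ(t) satisfies ‖δ(t)‖₂ ≤ ‖δ(t₀)‖₂ · exp(−γ λ₂(L) (t − t₀)) for all t ≥ t₀; that is, a common input does not affect the exponential decay of the disagreement among the agents. -/

import Mathlib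

/-!
Since every agent receives the same input `g`, the input is annihilated by the centering
`M ⊗ I_r`, and `M` commutes with `L` (`L 1 = 0`, `1ᵀ L = 0`); hence the disagreement obeys the
autonomous equation `δ̇ = -γ (L ⊗ I_r) δ`. Each of its `r` slices has zero sum, i.e. is orthogonal
to the kernel `span 1` of `L` (connectivity), so `δᵀ (L ⊗ I_r) δ ≥ λ₂ ‖δ‖²`. Thus
`d/dt ‖δ‖² ≤ -2γλ₂ ‖δ‖²`, and Grönwall's inequality gives the decay.
-/

open Matrix Finset
open scoped Kronecker

/-- The second-smallest eigenvalue (algebraic connectivity, `λ₂`) of a Hermitian matrix,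
obtained by sorting its eigenvalues in nondecreasing order. -/
noncomputable def lambda2 {n : ℕ} [NeZero n] {L : Matrix (Fin n) (Fin n) ℝ}
    (hL : L.IsHermitian) : ℝ :=
  hL.eigenvalues (Tuple.sort hL.eigenvalues 1)

namespace Tuple

variable {n : ℕ} {α : Type*} [LinearOrder α]

theorem apply_sort_zero_le [NeZero n] (f : Fin n → α) (i : Fin n) : f (sort f 0) ≤ f i := by
  simpa using monotone_sort f (Fin.zero_le ((sort f).symm i))

theorem apply_sort_one_le [NeZero n] (f : Fin n → α) {i : Fin n} (hi : i ≠ sort f 0) :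
    f (sort f 1) ≤ f i := by
  have hi' : (sort f).symm i ≠ 0 := fun h => hi (by rw [← h, Equiv.apply_symm_apply])
  simpa using monotone_sort f (Fin.one_le_of_ne_zero hi')

end Tuple

namespace OrthonormalBasis

variable {ι κ : Type*} [Fintype ι] [Fintype κ]

theorem sum_dotProduct_mul_dotProduct (b : OrthonormalBasis κ ℝ (EuclideanSpace ℝ ι))
    (x y : ι → ℝ) : ∑ k, (⇑(b k) ⬝ᵥ x) * (⇑(b k) ⬝ᵥ y) = x ⬝ᵥ y := by
  have h := b.sum_inner_mul_inner (WithLp.toLp 2 x) (WithLp.toLp 2 y)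
  simp only [EuclideanSpace.inner_eq_star_dotProduct, star_trivial] at h
  simpa [dotProduct_comm] using h

end OrthonormalBasis

namespace Matrix.IsHermitian

variable {ι : Type*} [Fintype ι] [DecidableEq ι] {A : Matrix ι ι ℝ}

theorem eigenvectorBasis_dotProduct_mulVec (hA : A.IsHermitian) (k : ι) (y : ι → ℝ) :
    ⇑(hA.eigenvectorBasis k) ⬝ᵥ (A *ᵥ y) =
      hA.eigenvalues k * (⇑(hA.eigenvectorBasis k) ⬝ᵥ y) := by
  rw [dotProduct_mulVec, ← mulVec_transpose, ← conjTranspose_eq_transpose_of_trivial, hA.eq,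
    mulVec_eigenvectorBasis, smul_dotProduct, smul_eq_mul]

theorem dotProduct_mulVec_eq_sum (hA : A.IsHermitian) (y : ι → ℝ) :
    y ⬝ᵥ (A *ᵥ y) = ∑ k, hA.eigenvalues k * (⇑(hA.eigenvectorBasis k) ⬝ᵥ y) ^ 2 := by
  rw [← hA.eigenvectorBasis.sum_dotProduct_mul_dotProduct]
  simp only [eigenvectorBasis_dotProduct_mulVec]
  exact Finset.sum_congr rfl fun k _ => by ring

theorem mul_dotProduct_self_le_dotProduct_mulVec (hA : A.IsHermitian) {c : ℝ} {k₀ : ι}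
    (hc : ∀ k ≠ k₀, c ≤ hA.eigenvalues k) {y : ι → ℝ}
    (hy : ⇑(hA.eigenvectorBasis k₀) ⬝ᵥ y = 0) : c * (y ⬝ᵥ y) ≤ y ⬝ᵥ (A *ᵥ y) := by
  rw [hA.dotProduct_mulVec_eq_sum, ← hA.eigenvectorBasis.sum_dotProduct_mul_dotProduct,
    Finset.mul_sum]
  refine Finset.sum_le_sum fun k _ => ?_
  rcases eq_or_ne k k₀ with rfl | hk
  · simp [hy]
  · rw [← sq]
    exact mul_le_mul_of_nonneg_right (hc k hk) (sq_nonneg _)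

end Matrix.IsHermitian

namespace Matrix

variable {l m κ R : Type*} [Fintype m] [Fintype κ] [CommSemiring R]

theorem dotProduct_eq_sum_slices (z w : m × κ → R) :
    z ⬝ᵥ w = ∑ s, (fun i => z (i, s)) ⬝ᵥ (fun i => w (i, s)) := by
  simp only [dotProduct, Fintype.sum_prod_type]
  exact Finset.sum_comm

variable [DecidableEq κ]

theorem kronecker_one_mulVec_apply (A : Matrix l m R) (z : m × κ → R) (i : l) (s : κ) :
    ((A ⊗ₖ (1 : Matrix κ κ R)) *ᵥ z) (i, s) = (A *ᵥ fun j => z (j, s)) i := by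
  simp only [mulVec, dotProduct, Fintype.sum_prod_type, kroneckerMap_apply, one_apply,
    mul_ite, mul_one, mul_zero, ite_mul, zero_mul, Finset.sum_ite_eq, Finset.mem_univ, if_true]

theorem dotProduct_kronecker_one_mulVec (A : Matrix m m R) (z : m × κ → R) :
    z ⬝ᵥ ((A ⊗ₖ (1 : Matrix κ κ R)) *ᵥ z) =
      ∑ s, (fun i => z (i, s)) ⬝ᵥ (A *ᵥ fun j => z (j, s)) := by
  simp only [dotProduct_eq_sum_slices z, kronecker_one_mulVec_apply]

end Matrix

theorem HasDerivAt.dotProduct {ι : Type*} [Fintype ι] {f g : ℝ → ι → ℝ} {f' g' : ι → ℝ} {t : ℝ}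
    (hf : HasDerivAt f f' t) (hg : HasDerivAt g g' t) :
    HasDerivAt (fun u => f u ⬝ᵥ g u) (f' ⬝ᵥ g t + f t ⬝ᵥ g') t := by
  rw [hasDerivAt_pi] at hf hg
  exact (HasDerivAt.fun_sum (u := Finset.univ) fun i _ => (hf i).mul (hg i)).congr_deriv
    Finset.sum_add_distrib

theorem le_mul_exp_of_hasDerivAt_le_mul {f f' : ℝ → ℝ} {K t₀ t : ℝ}
    (hf : ∀ u, t₀ ≤ u → HasDerivAt f (f' u) u) (hbound : ∀ u, t₀ ≤ u → f' u ≤ K * f u)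
    (ht : t₀ ≤ t) : f t ≤ f t₀ * Real.exp (K * (t - t₀)) := by
  rw [← gronwallBound_ε0]
  refine le_gronwallBound_of_liminf_deriv_right_le
    (fun u hu => (hf u hu.1).continuousAt.continuousWithinAt)
    (fun u hu _ hr => (hf u hu.1).hasDerivWithinAt.liminf_right_slope_le hr) le_rfl
    (fun u hu => by simpa using hbound u hu.1) t ⟨ht, le_rfl⟩

theorem sum_sub_inv_mul_sum {K : Type*} [Field K] [CharZero K] {n : ℕ} [NeZero n]
    (x : Fin n → K) : ∑ i, (x i - (n : K)⁻¹ * ∑ j, x j) = 0 := by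
  have hn : (n : K) ≠ 0 := NeZero.ne _
  rw [Finset.sum_sub_distrib, Finset.sum_const, Finset.card_univ, Fintype.card_fin, nsmul_eq_mul,
    mul_inv_cancel_left₀ hn, sub_self]

namespace SimpleGraph

section

variable {V R : Type*} [Fintype V] [DecidableEq V] [CommRing R] (G : SimpleGraph V)
  [DecidableRel G.Adj]

theorem sum_lapMatrix_mulVec (x : V → R) : ∑ i, (G.lapMatrix R *ᵥ x) i = 0 := by
  calc ∑ i, (G.lapMatrix R *ᵥ x) i = (fun _ => 1) ⬝ᵥ (G.lapMatrix R *ᵥ x) := by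
        simp [dotProduct]
    _ = (G.lapMatrix R *ᵥ fun _ => 1) ⬝ᵥ x := by
        rw [dotProduct_mulVec, ← mulVec_transpose, (G.isSymm_lapMatrix (R := R)).eq]
    _ = 0 := by rw [lapMatrix_mulVec_const_eq_zero, zero_dotProduct]

theorem lapMatrix_mulVec_sub_const (x : V → R) (c : R) :
    G.lapMatrix R *ᵥ (fun i => x i - c) = G.lapMatrix R *ᵥ x := by
  have hx : (fun i => x i - c) = x - c • fun _ => 1 := by ext; simp
  rw [hx, mulVec_sub, mulVec_smul, lapMatrix_mulVec_const_eq_zero, smul_zero, sub_zero]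

end

variable {n : ℕ} [NeZero n] (G : SimpleGraph (Fin n)) [DecidableRel G.Adj]

theorem eigenvalues_sort_zero_lapMatrix :
    (G.posSemidef_lapMatrix ℝ).isHermitian.eigenvalues
      (Tuple.sort (G.posSemidef_lapMatrix ℝ).isHermitian.eigenvalues 0) = 0 := by
  have hdet := (G.posSemidef_lapMatrix ℝ).isHermitian.det_eq_prod_eigenvalues
  rw [det_lapMatrix_eq_zero] at hdet
  obtain ⟨k, -, hk₀⟩ := Finset.prod_eq_zero_iff.mp hdet.symm
  have hk : (G.posSemidef_lapMatrix ℝ).isHermitian.eigenvalues k = 0 := by simpa using hk₀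
  refine le_antisymm ?_ ((G.posSemidef_lapMatrix ℝ).eigenvalues_nonneg _)
  simpa [hk] using Tuple.apply_sort_zero_le (G.posSemidef_lapMatrix ℝ).isHermitian.eigenvalues k

theorem lambda2_mul_dotProduct_self_le (hconn : G.Connected) {y : Fin n → ℝ}
    (hy : ∑ i, y i = 0) :
    lambda2 (G.posSemidef_lapMatrix ℝ).isHermitian * (y ⬝ᵥ y) ≤ y ⬝ᵥ (G.lapMatrix ℝ *ᵥ y) := by
  set hL := (G.posSemidef_lapMatrix ℝ).isHermitian
  set v := ⇑(hL.eigenvectorBasis (Tuple.sort hL.eigenvalues 0))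
  have hv : G.lapMatrix ℝ *ᵥ v = 0 := by
    rw [hL.mulVec_eigenvectorBasis, G.eigenvalues_sort_zero_lapMatrix, zero_smul]
  have hv_const (i : Fin n) : v i = v 0 :=
    G.lapMatrix_mulVec_eq_zero_iff_forall_reachable.mp hv i 0 (hconn.preconnected i 0)
  -- the bottom eigenvector spans `ker L = span 1`, so it is orthogonal to `y`
  refine hL.mul_dotProduct_self_le_dotProduct_mulVec (fun k hk => Tuple.apply_sort_one_le _ hk) ?_
  change v ⬝ᵥ y = 0
  rw [dotProduct, Finset.sum_congr rfl fun i _ => by rw [hv_const i], ← Finset.mul_sum, hy,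
    mul_zero]

section Kronecker

variable {κ : Type*} [Fintype κ] [DecidableEq κ]

theorem lambda2_mul_dotProduct_self_le_kronecker (hconn : G.Connected) {z : Fin n × κ → ℝ}
    (hz : ∀ s, ∑ i, z (i, s) = 0) :
    lambda2 (G.posSemidef_lapMatrix ℝ).isHermitian * (z ⬝ᵥ z) ≤
      z ⬝ᵥ ((G.lapMatrix ℝ ⊗ₖ (1 : Matrix κ κ ℝ)) *ᵥ z) := by
  rw [dotProduct_kronecker_one_mulVec, dotProduct_eq_sum_slices z, Finset.mul_sum]
  exact Finset.sum_le_sum fun s _ => G.lambda2_mul_dotProduct_self_le hconn (hz s)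

theorem hasDerivAt_disagreement {γ t : ℝ} {w : κ → ℝ} {Θ δ : ℝ → Fin n × κ → ℝ}
    (hΘ : HasDerivAt Θ
      (fun p => -γ * ((G.lapMatrix ℝ ⊗ₖ (1 : Matrix κ κ ℝ)) *ᵥ Θ t) p + w p.2) t)
    (hδ : ∀ u p, δ u p = Θ u p - (n : ℝ)⁻¹ * ∑ i, Θ u (i, p.2)) :
    HasDerivAt δ (-γ • ((G.lapMatrix ℝ ⊗ₖ (1 : Matrix κ κ ℝ)) *ᵥ δ t)) t := by
  obtain rfl : δ = fun u p => Θ u p - (n : ℝ)⁻¹ * ∑ i, Θ u (i, p.2) :=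
    funext fun u => funext (hδ u)
  rw [hasDerivAt_pi] at hΘ ⊢
  rintro ⟨i, s⟩
  convert (hΘ (i, s)).fun_sub ((HasDerivAt.fun_sum (u := Finset.univ)
    fun j _ => hΘ (j, s)).const_mul (n : ℝ)⁻¹) using 1
  simp only [Pi.smul_apply, smul_eq_mul, kronecker_one_mulVec_apply]
  rw [G.lapMatrix_mulVec_sub_const (fun j => Θ t (j, s)), Finset.sum_add_distrib,
    ← Finset.mul_sum, G.sum_lapMatrix_mulVec]
  have hn : (n : ℝ) ≠ 0 := NeZero.ne _
  simp [hn]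

end Kronecker

end SimpleGraph

theorem statement_14_general (n : ℕ) [NeZero n]
    (G : SimpleGraph (Fin n)) [DecidableRel G.Adj] (hconn : G.Connected)
    (r : ℕ) (t₀ : ℝ) (γ : ℝ) (hγ : 0 < γ)
    (g : ℝ → (Fin r → ℝ))
    (Θ : ℝ → (Fin n × Fin r → ℝ))
    (hΘ : ∀ t, t₀ ≤ t → HasDerivAt Θ
      (fun p => -γ * ((G.lapMatrix ℝ ⊗ₖ (1 : Matrix (Fin r) (Fin r) ℝ)).mulVec (Θ t)) p
        + g t p.2) t)
    (δ : ℝ → (Fin n × Fin r → ℝ))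
    (hδ : ∀ t p, δ t p = Θ t p - (n : ℝ)⁻¹ * ∑ i, Θ t (i, p.2)) :
    ∀ t, t₀ ≤ t →
      Real.sqrt (∑ p, (δ t p) ^ 2) ≤
        Real.sqrt (∑ p, (δ t₀ p) ^ 2) *
          Real.exp (-γ * lambda2 (G.posSemidef_lapMatrix ℝ).isHermitian * (t - t₀)) := by
  set Lk := G.lapMatrix ℝ ⊗ₖ (1 : Matrix (Fin r) (Fin r) ℝ)
  set lam := lambda2 (G.posSemidef_lapMatrix ℝ).isHermitian
  have hδ' (u : ℝ) (hu : t₀ ≤ u) : HasDerivAt δ (-γ • (Lk *ᵥ δ u)) u :=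
    G.hasDerivAt_disagreement (hΘ u hu) hδ
  have hδ_centered (u : ℝ) (s : Fin r) : ∑ i, δ u (i, s) = 0 := by
    simpa only [hδ] using sum_sub_inv_mul_sum fun i => Θ u (i, s)
  have hdissipation (u : ℝ) :
      (-γ • (Lk *ᵥ δ u)) ⬝ᵥ δ u + δ u ⬝ᵥ (-γ • (Lk *ᵥ δ u)) ≤ 2 * (-γ * lam) * (δ u ⬝ᵥ δ u) := by
    have hq := G.lambda2_mul_dotProduct_self_le_kronecker hconn (hδ_centered u)
    rw [smul_dotProduct, dotProduct_smul, dotProduct_comm (Lk *ᵥ δ u), smul_eq_mul]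
    linarith [mul_le_mul_of_nonneg_left hq hγ.le]
  intro t ht
  have henergy := le_mul_exp_of_hasDerivAt_le_mul
    (fun u hu => (hδ' u hu).dotProduct (hδ' u hu)) (fun u _ => hdissipation u) ht
  have hsq (u : ℝ) : ∑ p, δ u p ^ 2 = δ u ⬝ᵥ δ u := by simp only [sq]; rfl
  have h₀ : 0 ≤ δ t₀ ⬝ᵥ δ t₀ := Finset.sum_nonneg fun p _ => mul_self_nonneg _
  rw [hsq, hsq, ← Real.sqrt_sq (Real.exp_pos (-γ * lam * (t - t₀))).le, ← Real.sqrt_mul h₀,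
    ← Real.exp_nat_mul]
  refine Real.sqrt_le_sqrt (henergy.trans_eq ?_)
  push_cast
  ring_nf

/-- **Common inputs do not affect disagreement decay.** If
`Θ̇(t) = -γ (L ⊗ I_r) Θ(t) + 1ₙ ⊗ g(t)` with `g` continuous, then the disagreement
`δ(t) = (M ⊗ I_r) Θ(t)`, `M = Iₙ - (1/n) 1ₙ 1ₙᵀ`, satisfies
`‖δ(t)‖₂ ≤ ‖δ(t₀)‖₂ exp(-γ λ₂(L) (t - t₀))` for all `t ≥ t₀`. -/
theorem statement_14 (n : ℕ) (hn : 2 ≤ n) [NeZero n]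
    (G : SimpleGraph (Fin n)) [DecidableRel G.Adj] (hconn : G.Connected)
    (r : ℕ) (hr : 1 ≤ r) (t₀ : ℝ) (γ : ℝ) (hγ : 0 < γ)
    (g : ℝ → (Fin r → ℝ)) (hg : ContinuousOn g (Set.Ici t₀))
    (Θ : ℝ → (Fin n × Fin r → ℝ))
    (hΘ : ∀ t, t₀ ≤ t → HasDerivAt Θ
      (fun p => -γ * ((G.lapMatrix ℝ ⊗ₖ (1 : Matrix (Fin r) (Fin r) ℝ)).mulVec (Θ t)) p
        + g t p.2) t)
    (δ : ℝ → (Fin n × Fin r → ℝ))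
    (hδ : ∀ t p, δ t p = Θ t p - (n : ℝ)⁻¹ * ∑ i, Θ t (i, p.2)) :
    ∀ t, t₀ ≤ t →
      Real.sqrt (∑ p, (δ t p) ^ 2) ≤
        Real.sqrt (∑ p, (δ t₀ p) ^ 2) *
          Real.exp (-γ * lambda2 (G.posSemidef_lapMatrix ℝ).isHermitian * (t - t₀)) :=
  statement_14_general n G hconn r t₀ γ hγ g Θ hΘ δ hδ
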